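/- arXiv:2304.01150 — 3 statements merged into one kernel-verified Lean document; each statement's English description precedes it below -/
import Mathlib

section
/- In an idempotent semiring, for an n×n matrix A over the semiring in which every cycle weight w(γ) satisfies w(γ) + 1 = 1 (i.e., w(γ) ⪯ 1), the Kleene star A* = I + A + A^2 + ... converges at radius n−1, i.e., I + A + ... + A^{n-1} = I + A + ... + A^k for all k ≥ n−1. In particular, for A ∈ Mat_n(P(R)) (powerset semiring of R with union/intersection), the Kleene star always converges at radius at most n−1. -/
/-- Matrix multiplication over the powerset semiring `P(ℝ)`. -/
noncomputable def setMatMul {n : ℕ} (M N : Matrix (Fin n) (Fin n) (Set ℝ)) :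
    Matrix (Fin n) (Fin n) (Set ℝ) := fun i j => ⋃ k : Fin n, M i k ∩ N k j

/-- Matrix powers over the powerset semiring `P(ℝ)`, with `A⁰ = I`. -/
noncomputable def setMatPow {n : ℕ} (A : Matrix (Fin n) (Fin n) (Set ℝ)) :
    ℕ → Matrix (Fin n) (Fin n) (Set ℝ)
  | 0 => fun i j => if i = j then Set.univ else ∅
  | k + 1 => setMatMul (setMatPow A k) A

/-- The `r`-cumulant `C_r(A) = I + A + ⋯ + A^r` over `P(ℝ)`. -/
noncomputable def setCumulant {n : ℕ} (A : Matrix (Fin n) (Fin n) (Set ℝ)) (r : ℕ) :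
    Matrix (Fin n) (Fin n) (Set ℝ) :=
  fun i j => ⋃ p ∈ Finset.range (r + 1), setMatPow A p i j

section Aux

variable {S : Type*} [Semiring S]

lemma ks_le_trans {a b c : S} (hab : a + b = b) (hbc : b + c = c) : a + c = c := by
  calc a + c = a + (b + c) := by rw [hbc]
    _ = (a + b) + c := by rw [add_assoc]
    _ = b + c := by rw [hab]
    _ = c := hbc

lemma ks_add_le {a b c : S} (ha : a + c = c) (hb : b + c = c) :
    (a + b) + c = c := by
  rw [add_assoc, hb, ha]

lemma ks_sum_le {ι : Type*} {s : Finset ι} {f : ι → S} {c : S}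
    (h : ∀ i ∈ s, f i + c = c) : (∑ i ∈ s, f i) + c = c := by
  classical
  induction s using Finset.induction_on with
  | empty => simp
  | insert a s' hx ih =>
    rw [Finset.sum_insert hx]
    exact ks_add_le (h a (Finset.mem_insert_self a s'))
      (ih fun i hi => h i (Finset.mem_insert_of_mem hi))

lemma ks_le_sum {ι : Type*} {s : Finset ι} (f : ι → S) {a : ι} (hS : ∀ x : S, x + x = x)
    (ha : a ∈ s) : f a + ∑ i ∈ s, f i = ∑ i ∈ s, f i := by
  classical
  rw [← Finset.add_sum_erase _ _ ha, ← add_assoc, hS]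

/-- Path weight: the weight of the walk `γ 0, γ 1, …, γ m`. -/
def pw {n : ℕ} (A : Matrix (Fin n) (Fin n) S) (γ : ℕ → Fin n) (m : ℕ) : S :=
  ((List.range m).map (fun i => A (γ i) (γ (i + 1)))).prod

lemma pw_zero {n : ℕ} (A : Matrix (Fin n) (Fin n) S) (γ : ℕ → Fin n) : pw A γ 0 = 1 := rfl

lemma pw_one {n : ℕ} (A : Matrix (Fin n) (Fin n) S) (γ : ℕ → Fin n) :
    pw A γ 1 = A (γ 0) (γ 1) := by
  simp [pw, List.range_succ]

lemma pw_succ {n : ℕ} (A : Matrix (Fin n) (Fin n) S) (γ : ℕ → Fin n) (m : ℕ) :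
    pw A γ (m + 1) = pw A γ m * A (γ m) (γ (m + 1)) := by
  simp [pw, List.range_succ]

lemma pw_congr {n : ℕ} (A : Matrix (Fin n) (Fin n) S) {γ δ : ℕ → Fin n} {m : ℕ}
    (h : ∀ t ≤ m, γ t = δ t) : pw A γ m = pw A δ m := by
  unfold pw
  congr 1
  apply List.map_congr_left
  intro a ha
  rw [List.mem_range] at ha
  rw [h a (by omega), h (a + 1) (by omega)]

lemma pw_split {n : ℕ} (A : Matrix (Fin n) (Fin n) S) (γ : ℕ → Fin n) (s u : ℕ) :
    pw A γ (s + u) = pw A γ s * pw A (fun t => γ (s + t)) u := by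
  induction u with
  | zero => simp [pw_zero]
  | succ u ih =>
    rw [show s + (u + 1) = (s + u) + 1 from rfl, pw_succ, ih, pw_succ, mul_assoc]
    rfl

/-- Extension of a tuple `Fin (m+1) → Fin n` to `ℕ → Fin n`. -/
def ext' {n m : ℕ} (f : Fin (m + 1) → Fin n) : ℕ → Fin n :=
  fun t => f ⟨min t m, Nat.lt_succ_of_le (min_le_right _ _)⟩

lemma ext'_of_le {n m : ℕ} (f : Fin (m + 1) → Fin n) {t : ℕ} (ht : t ≤ m) :
    ext' f t = f ⟨t, Nat.lt_succ_of_le ht⟩ := by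
  simp [ext', Nat.min_eq_left ht]

lemma ext'_zero {n m : ℕ} (f : Fin (m + 1) → Fin n) : ext' f 0 = f 0 := by
  rw [ext'_of_le f (Nat.zero_le m)]
  exact congrArg f (Fin.ext (by simp))

lemma ext'_cons {n m : ℕ} (k : Fin n) (g : Fin (m + 1) → Fin n) (t : ℕ) (ht : t ≤ m) :
    ext' (Fin.cons (α := fun _ : Fin (m + 2) => Fin n) k g) (t + 1) = ext' g t := by
  rw [ext'_of_le _ (by omega : t + 1 ≤ m + 1), ext'_of_le _ ht]
  have h : (⟨t + 1, by omega⟩ : Fin (m + 2)) = Fin.succ (⟨t, by omega⟩ : Fin (m + 1)) := rfl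
  rw [h, Fin.cons_succ]

/-- Expansion of matrix powers as sums over walks. -/
lemma pow_apply_eq {n : ℕ} (A : Matrix (Fin n) (Fin n) S) (m : ℕ) (i j : Fin n) :
    (A ^ m) i j =
      ∑ f : Fin (m + 1) → Fin n,
        if f 0 = i ∧ f (Fin.last m) = j then pw A (ext' f) m else 0 := by
  classical
  induction m generalizing i j with
  | zero =>
    rw [pow_zero]
    rw [show (1 : Matrix (Fin n) (Fin n) S) i j = if i = j then 1 else 0 from Matrix.one_apply]
    by_cases h : i = j
    · subst h
      rw [if_pos rfl,
        Finset.sum_eq_single (fun _ => i : Fin (0 + 1) → Fin n)]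
      · rw [if_pos ⟨rfl, rfl⟩, pw_zero]
      · intro g _ hg
        rw [if_neg]
        rintro ⟨h1, h2⟩
        apply hg
        funext t
        haveI : Subsingleton (Fin (0 + 1)) := Fin.subsingleton_one
        rw [Subsingleton.elim t 0, h1]
      · intro hmem; exact absurd (Finset.mem_univ _) hmem
    · rw [if_neg h, Eq.comm, Finset.sum_eq_zero]
      intro g _
      rw [if_neg]
      rintro ⟨h1, h2⟩
      haveI : Subsingleton (Fin (0 + 1)) := Fin.subsingleton_one
      exact h (h1 ▸ h2 ▸ congrArg g (Subsingleton.elim _ _))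
  | succ m ih =>
    rw [pow_succ', Matrix.mul_apply]
    have hre : (∑ f : Fin (m + 1 + 1) → Fin n,
          if f 0 = i ∧ f (Fin.last (m + 1)) = j then pw A (ext' f) (m + 1) else 0)
        = ∑ p : Fin n × (Fin (m + 1) → Fin n),
          if p.1 = i ∧ p.2 (Fin.last m) = j then A p.1 (p.2 0) * pw A (ext' p.2) m else 0 := by
      refine (Fintype.sum_equiv (Fin.consEquiv (fun _ : Fin (m + 2) => Fin n)) _ _ ?_).symm
      rintro ⟨k, g⟩
      have hcons : (Fin.consEquiv (fun _ : Fin (m + 2) => Fin n)) (k, g) = Fin.cons k g := rfl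
      rw [hcons]
      have h0 : Fin.cons (α := fun _ : Fin (m + 2) => Fin n) k g (0 : Fin (m + 2)) = k := by
        simp
      have hlast : Fin.cons (α := fun _ : Fin (m + 2) => Fin n) k g (Fin.last (m + 1))
          = g (Fin.last m) := by
        rw [← Fin.succ_last, Fin.cons_succ]
      rw [h0, hlast]
      by_cases hc : k = i ∧ g (Fin.last m) = j
      · rw [if_pos hc, if_pos hc]
        have hsplit := pw_split A
          (ext' (Fin.cons (α := fun _ : Fin (m + 2) => Fin n) k g)) 1 m
        rw [show 1 + m = m + 1 by omega] at hsplit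
        rw [hsplit, pw_one]
        have e0 : ext' (Fin.cons (α := fun _ : Fin (m + 2) => Fin n) k g) 0 = k := by
          rw [ext'_zero, Fin.cons_zero]
        have e1 : ext' (Fin.cons (α := fun _ : Fin (m + 2) => Fin n) k g) 1 = g 0 := by
          exact (ext'_cons k g 0 (Nat.zero_le m)).trans (ext'_zero g)
        rw [e0, e1]
        congr 1
        apply pw_congr
        intro t ht
        rw [show 1 + t = t + 1 by omega, ext'_cons k g t ht]
      · rw [if_neg hc, if_neg hc]
    rw [hre, Fintype.sum_prod_type]
    have hR : (∑ x : Fin n, ∑ g : Fin (m + 1) → Fin n,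
          if x = i ∧ g (Fin.last m) = j then A x (g 0) * pw A (ext' g) m else 0)
        = ∑ g : Fin (m + 1) → Fin n,
          if g (Fin.last m) = j then A i (g 0) * pw A (ext' g) m else 0 := by
      rw [Finset.sum_eq_single i]
      · refine Finset.sum_congr rfl fun g _ => ?_
        by_cases hgj : g (Fin.last m) = j
        · rw [if_pos ⟨rfl, hgj⟩, if_pos hgj]
        · rw [if_neg (fun hc => hgj hc.2), if_neg hgj]
      · intro x _ hx
        exact Finset.sum_eq_zero fun g _ => if_neg (fun hc => hx hc.1)
      · intro h; exact absurd (Finset.mem_univ i) h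
    rw [hR]
    calc ∑ k, A i k * (A ^ m) k j
        = ∑ k, ∑ g : Fin (m + 1) → Fin n,
            if g 0 = k ∧ g (Fin.last m) = j then A i k * pw A (ext' g) m else 0 := by
          refine Finset.sum_congr rfl fun k _ => ?_
          rw [ih k j, Finset.mul_sum]
          refine Finset.sum_congr rfl fun g _ => ?_
          rw [mul_ite, mul_zero]
      _ = ∑ g : Fin (m + 1) → Fin n, ∑ k,
            if g 0 = k ∧ g (Fin.last m) = j then A i k * pw A (ext' g) m else 0 :=
          Finset.sum_comm
      _ = ∑ g : Fin (m + 1) → Fin n,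
            if g (Fin.last m) = j then A i (g 0) * pw A (ext' g) m else 0 := by
          refine Finset.sum_congr rfl fun g _ => ?_
          rw [Finset.sum_eq_single (g 0)]
          · by_cases hgj : g (Fin.last m) = j
            · rw [if_pos ⟨rfl, hgj⟩, if_pos hgj]
            · rw [if_neg (fun hc => hgj hc.2), if_neg hgj]
          · intro x _ hx
            exact if_neg (fun hc => hx hc.1.symm)
          · intro h; exact absurd (Finset.mem_univ (g 0)) h

/-- Any walk from `i` to `j` of length `m` has weight dominated by `(A^m) i j`. -/
lemma pw_le_pow {n : ℕ} (hS : ∀ x : S, x + x = x) (A : Matrix (Fin n) (Fin n) S)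
    (δ : ℕ → Fin n) (m : ℕ) (i j : Fin n) (h0 : δ 0 = i) (hm : δ m = j) :
    pw A δ m + (A ^ m) i j = (A ^ m) i j := by
  classical
  rw [pow_apply_eq A m i j]
  set f : Fin (m + 1) → Fin n := fun t => δ t with hf
  have hcond : f 0 = i ∧ f (Fin.last m) = j := by
    constructor
    · show δ ((0 : Fin (m + 1)) : ℕ) = i
      simpa using h0
    · show δ ((Fin.last m : Fin (m + 1)) : ℕ) = j
      simpa using hm
  have hwef : pw A (ext' f) m = pw A δ m := by
    apply pw_congr
    intro t ht
    rw [ext'_of_le _ ht]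
  have H := ks_le_sum (s := (Finset.univ : Finset (Fin (m + 1) → Fin n)))
    (fun g => if g 0 = i ∧ g (Fin.last m) = j then pw A (ext' g) m else 0)
    hS (Finset.mem_univ f)
  simpa only [hcond.1, hcond.2, and_self, if_true, hwef] using H

/-- The key absorption: a walk of length `n` possessing a repeated vertex has
weight dominated by the cumulant. -/
lemma walk_absorb {n : ℕ} (hS : ∀ a : S, a + a = a)
    (A : Matrix (Fin n) (Fin n) S)
    (hcyc : ∀ (m : ℕ) (γ : ℕ → Fin n), γ 0 = γ m →
      ((List.range m).map (fun i => A (γ i) (γ (i + 1)))).prod + 1 = 1)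
    (i j : Fin n) (f : Fin (n + 1) → Fin n)
    (h0 : f 0 = i) (hl : f (Fin.last n) = j) (a b : Fin (n + 1)) (hab : a < b)
    (hfab : f a = f b) :
    pw A (ext' f) n + ∑ p ∈ Finset.range n, (A ^ p) i j
      = ∑ p ∈ Finset.range n, (A ^ p) i j := by
  classical
  have hn : 0 < n := i.pos
  set γ : ℕ → Fin n := ext' f with hγ
  set s : ℕ := (a : ℕ) with hs
  set t : ℕ := (b : ℕ) with ht
  have hst : s < t := hab
  have htn : t ≤ n := Nat.lt_succ_iff.mp b.isLt
  have hγs : γ s = f a := by rw [hγ, ext'_of_le f (by omega : s ≤ n)]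
  have hγt : γ t = f b := by rw [hγ, ext'_of_le f htn]
  have hγst : γ s = γ t := by rw [hγs, hγt, hfab]
  set c : ℕ := t - s with hc
  set m' : ℕ := n - c with hm'
  have hc1 : 1 ≤ c := by omega
  have hγ0 : γ 0 = i := by
    rw [hγ, ext'_of_le f (Nat.zero_le _)]
    rw [← h0]; congr 1
  have hγn : γ n = j := by
    rw [hγ, ext'_of_le f le_rfl]
    rw [← hl]; congr 1
  -- the cycle
  have hmid : pw A (fun u => γ (s + u)) c + 1 = 1 := by
    apply hcyc c (fun u => γ (s + u))
    show γ (s + 0) = γ (s + c)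
    rw [show s + 0 = s from rfl, show s + c = t by omega, hγst]
  -- decomposition of the full walk
  have hdecomp : pw A γ n =
      pw A γ s * (pw A (fun u => γ (s + u)) c * pw A (fun u => γ (t + u)) (n - t)) := by
    have h1 : pw A γ n = pw A γ s * pw A (fun u => γ (s + u)) (n - s) := by
      rw [← pw_split]; congr 1; omega
    have h2 : pw A (fun u => γ (s + u)) (n - s) =
        pw A (fun u => γ (s + u)) c * pw A (fun u => γ (s + (c + u))) (n - t) := by
      rw [← pw_split]; congr 1; omega
    have h3 : pw A (fun u => γ (s + (c + u))) (n - t) = pw A (fun u => γ (t + u)) (n - t) := by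
      apply pw_congr; intro u _; congr 1; omega
    rw [h1, h2, h3]
  -- the shortened walk
  set δ : ℕ → Fin n := fun u => if u < s then γ u else γ (u + c) with hδ
  have hδ0 : δ 0 = i := by
    by_cases h : 0 < s
    · rw [hδ]; simp only [h, if_pos]; exact hγ0
    · have hs0 : s = 0 := by omega
      rw [hδ]
      simp only [show ¬ (0 < s) from h, if_neg, if_false]
      rw [show 0 + c = t by omega, ← hγst, hs0, hγ0]
  have hδm' : δ m' = j := by
    rw [hδ]
    simp only [show ¬ (m' < s) by omega, if_false]
    rw [show m' + c = n by omega, hγn]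
  have hδw : pw A δ m' = pw A γ s * pw A (fun u => γ (t + u)) (n - t) := by
    have h1 : pw A δ m' = pw A δ s * pw A (fun u => δ (s + u)) (n - t) := by
      rw [← pw_split]; congr 1; omega
    have h2 : pw A δ s = pw A γ s := by
      apply pw_congr
      intro u hu
      rcases lt_or_eq_of_le hu with h | h
      · rw [hδ]; simp [h]
      · subst h
        rw [hδ]
        simp only [lt_irrefl, if_false]
        rw [show s + c = t by omega, ← hγst]
    have h3 : pw A (fun u => δ (s + u)) (n - t) = pw A (fun u => γ (t + u)) (n - t) := by
      apply pw_congr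
      intro u _
      rw [hδ]
      simp only [show ¬ (s + u < s) by omega, if_false]
      congr 1; omega
    rw [h1, h2, h3]
  -- absorption of the cycle
  have habs : pw A γ n + pw A δ m' = pw A δ m' := by
    rw [hdecomp, hδw, ← mul_assoc, ← add_mul]
    have : pw A γ s * pw A (fun u => γ (s + u)) c + pw A γ s
        = pw A γ s * (pw A (fun u => γ (s + u)) c + 1) := by
      rw [mul_add, mul_one]
    rw [this, hmid, mul_one]
  -- chain the dominations
  have hδle : pw A δ m' + ∑ p ∈ Finset.range n, (A ^ p) i j
      = ∑ p ∈ Finset.range n, (A ^ p) i j := by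
    refine ks_le_trans (pw_le_pow hS A δ m' i j hδ0 hδm') ?_
    exact ks_le_sum (fun p => (A ^ p) i j) hS (Finset.mem_range.mpr (by omega))
  exact ks_le_trans habs hδle

end Aux

section Part1

variable {S : Type} [Semiring S]

/-- Base case: `A^n` is dominated by `I + A + ⋯ + A^{n-1}`. -/
lemma pow_n_le (hS : ∀ a : S, a + a = a) {n : ℕ} (hn : 1 ≤ n)
    (A : Matrix (Fin n) (Fin n) S)
    (hcyc : ∀ (m : ℕ) (γ : ℕ → Fin n), γ 0 = γ m →
      ((List.range m).map (fun i => A (γ i) (γ (i + 1)))).prod + 1 = 1) :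
    A ^ n + ∑ p ∈ Finset.range n, A ^ p = ∑ p ∈ Finset.range n, A ^ p := by
  classical
  ext i j
  rw [Matrix.add_apply]
  simp only [Matrix.sum_apply]
  rw [pow_apply_eq A n i j]
  apply ks_sum_le
  intro f _
  by_cases hcond : f 0 = i ∧ f (Fin.last n) = j
  · rw [if_pos hcond]
    obtain ⟨a, b, hab, hfab⟩ :=
      Fintype.exists_ne_map_eq_of_card_lt f (by simp)
    rcases lt_or_gt_of_ne hab with hlt | hgt
    · exact walk_absorb hS A hcyc i j f hcond.1 hcond.2 a b hlt hfab
    · exact walk_absorb hS A hcyc i j f hcond.1 hcond.2 b a hgt hfab.symm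
  · rw [if_neg hcond]
    exact zero_add _

lemma pow_le_C (hS : ∀ a : S, a + a = a) {n : ℕ} (hn : 1 ≤ n)
    (A : Matrix (Fin n) (Fin n) S)
    (hcyc : ∀ (m : ℕ) (γ : ℕ → Fin n), γ 0 = γ m →
      ((List.range m).map (fun i => A (γ i) (γ (i + 1)))).prod + 1 = 1) :
    ∀ m, n ≤ m → A ^ m + ∑ p ∈ Finset.range n, A ^ p = ∑ p ∈ Finset.range n, A ^ p := by
  have hSM : ∀ M : Matrix (Fin n) (Fin n) S, M + M = M := by
    intro M; ext i j; rw [Matrix.add_apply]; exact hS _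
  intro m
  induction m with
  | zero => intro h; omega
  | succ m ih =>
    intro hm
    rcases Nat.lt_or_ge m n with h | h
    · have : n = m + 1 := by omega
      subst this
      exact pow_n_le hS hn A hcyc
    · have h1 := ih h
      have h2 : A ^ (m + 1) + (∑ p ∈ Finset.range n, A ^ p) * A
          = (∑ p ∈ Finset.range n, A ^ p) * A := by
        rw [pow_succ, ← add_mul, h1]
      have h3 : (∑ p ∈ Finset.range n, A ^ p) * A + ∑ p ∈ Finset.range n, A ^ p
          = ∑ p ∈ Finset.range n, A ^ p := by
        rw [Finset.sum_mul]
        apply ks_sum_le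
        intro p hp
        rw [← pow_succ]
        rcases Nat.lt_or_ge (p + 1) n with h4 | h4
        · exact ks_le_sum (fun q => A ^ q) hSM (Finset.mem_range.mpr h4)
        · have : p + 1 = n := by
            have := Finset.mem_range.mp hp; omega
          rw [this]
          exact pow_n_le hS hn A hcyc
      exact ks_le_trans h2 h3

lemma part1_main (hS : ∀ a : S, a + a = a) (n : ℕ)
    (A : Matrix (Fin n) (Fin n) S)
    (hcyc : ∀ (m : ℕ) (γ : ℕ → Fin n), γ 0 = γ m →
      ((List.range m).map (fun i => A (γ i) (γ (i + 1)))).prod + 1 = 1) :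
    ∀ k : ℕ, n - 1 ≤ k →
      ∑ i ∈ Finset.range n, A ^ i = ∑ i ∈ Finset.range (k + 1), A ^ i := by
  intro k hk
  rcases Nat.eq_zero_or_pos n with hn | hn
  · subst hn
    ext i j
    exact i.elim0
  · have key : ∀ d, ∑ p ∈ Finset.range (n + d), A ^ p = ∑ p ∈ Finset.range n, A ^ p := by
      intro d
      induction d with
      | zero => rfl
      | succ d ih =>
        rw [show n + (d + 1) = (n + d) + 1 from rfl, Finset.sum_range_succ, ih, add_comm]
        exact pow_le_C hS hn A hcyc (n + d) (by omega)
    have : k + 1 = n + (k + 1 - n) := by omega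
    rw [this, key]

end Part1

section Part2

/-- The powerset semiring structure on `Set ℝ`: `+ = ∪`, `* = ∩`, `0 = ∅`, `1 = univ`. -/
def psSemiring : Semiring (Set ℝ) :=
  letI : Zero (Set ℝ) := ⟨∅⟩
  letI : One (Set ℝ) := ⟨Set.univ⟩
  letI : Add (Set ℝ) := ⟨(· ∪ ·)⟩
  letI : Mul (Set ℝ) := ⟨(· ∩ ·)⟩
  { add_assoc := Set.union_assoc
    zero_add := Set.empty_union
    add_zero := Set.union_empty
    add_comm := Set.union_comm
    nsmul := nsmulRec
    left_distrib := Set.inter_union_distrib_left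
    right_distrib := Set.union_inter_distrib_right
    zero_mul := Set.empty_inter
    mul_zero := Set.inter_empty
    mul_assoc := Set.inter_assoc
    one_mul := Set.univ_inter
    mul_one := Set.inter_univ }

end Part2

/-- In an idempotent semiring, if every cycle weight `w(γ)` satisfies
`w(γ) + 1 = 1`, then the Kleene star converges at radius `n - 1`:
`I + A + ⋯ + A^{n-1} = I + A + ⋯ + A^k` for every `k ≥ n - 1`.  In particular,
for matrices over the powerset semiring `P(ℝ)` the Kleene star always converges
at radius at most `n - 1`. -/
theorem kleene_star_convergence :
    (∀ (S : Type) [Semiring S], (∀ a : S, a + a = a) →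
      ∀ (n : ℕ) (A : Matrix (Fin n) (Fin n) S),
        (∀ (m : ℕ) (γ : ℕ → Fin n), γ 0 = γ m →
          ((List.range m).map (fun i => A (γ i) (γ (i + 1)))).prod + 1 = 1) →
        ∀ k : ℕ, n - 1 ≤ k →
          ∑ i ∈ Finset.range n, A ^ i = ∑ i ∈ Finset.range (k + 1), A ^ i) ∧
    (∀ (n : ℕ) (A : Matrix (Fin n) (Fin n) (Set ℝ)),
      ∀ k : ℕ, n - 1 ≤ k → setCumulant A (n - 1) = setCumulant A k) := by
  constructor
  · intro S _ hS n A hcyc k hk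
    exact part1_main hS n A hcyc k hk
  · intro n A k hk
    rcases Nat.eq_zero_or_pos n with hn | hn
    · subst hn
      funext i
      exact i.elim0
    · letI := psSemiring
      have hS : ∀ a : Set ℝ, a + a = a := fun a => Set.union_self a
      have hsum : ∀ (s : Finset (Fin n)) (f : Fin n → Set ℝ),
          (∑ x ∈ s, f x) = ⋃ x ∈ s, f x := by
        intro s f
        classical
        induction s using Finset.induction_on with
        | empty => simp; rfl
        | insert x s' hx ih =>
          rw [Finset.sum_insert hx, Finset.set_biUnion_insert, ← ih]
          rfl
      have hpow : ∀ p, A ^ p = setMatPow A p := by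
        intro p
        induction p with
        | zero =>
          funext i j
          rw [pow_zero]
          show (1 : Matrix (Fin n) (Fin n) (Set ℝ)) i j = _
          rw [Matrix.one_apply]
          rfl
        | succ p ih =>
          funext i j
          rw [pow_succ, Matrix.mul_apply, ih]
          show (∑ x : Fin n, setMatPow A p i x ∩ A x j) = setMatMul (setMatPow A p) A i j
          rw [hsum Finset.univ (fun x => setMatPow A p i x ∩ A x j)]
          simp [setMatMul]
      have hcum : ∀ r, setCumulant A r = fun i j => (∑ p ∈ Finset.range (r + 1), A ^ p) i j := by
        intro r
        funext i j
        rw [Matrix.sum_apply]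
        have : (∑ p ∈ Finset.range (r + 1), (A ^ p) i j)
            = ⋃ p ∈ Finset.range (r + 1), (A ^ p) i j := by
          classical
          induction (Finset.range (r + 1)) using Finset.induction_on with
          | empty => simp; rfl
          | insert x s' hx ih =>
            rw [Finset.sum_insert hx, Finset.set_biUnion_insert, ← ih]
            rfl
        rw [this]
        simp only [setCumulant]
        exact Set.iUnion_congr fun p => Set.iUnion_congr fun _ => by rw [hpow p]
      have hmain := part1_main hS n A
        (fun m γ _ => by
          show (_ : Set ℝ) ∪ Set.univ = Set.univ
          exact Set.union_univ _)
        k hk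
      rw [hcum (n - 1), hcum k]
      funext i j
      rw [show n - 1 + 1 = n by omega, hmain]
end

section
/- The universal contact semiring: the set C of functions f : R → P(R) with addition (f ⊕ g)(t) = f(t) ∪ g(t) and multiplication (f ⊙ g)(t) = ⋃_{x ∈ f(t)} (g(x + t) + x), where A + x = {a + x : a ∈ A}, with additive identity the constant-∅ function and multiplicative identity the constant-{0} function, forms a semiring. -/
/-- Addition in the universal contact semiring: pointwise union. -/
def ucsAdd (f g : ℝ → Set ℝ) : ℝ → Set ℝ := fun t => f t ∪ g t

/-- Multiplication in the universal contact semiring: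
`(f ⊙ g)(t) = ⋃_{x ∈ f(t)} (g(x + t) + x)` where `A + x = {a + x : a ∈ A}`. -/
def ucsMul (f g : ℝ → Set ℝ) : ℝ → Set ℝ :=
  fun t => ⋃ x ∈ f t, (fun a : ℝ => a + x) '' g (x + t)

def ucsZero : ℝ → Set ℝ := fun _ => ∅
def ucsOne : ℝ → Set ℝ := fun _ => ({0} : Set ℝ)

/-- The universal contact semiring: the set of functions `f : ℝ → P(ℝ)` with
pointwise union as addition and `(f ⊙ g)(t) = ⋃_{x ∈ f(t)} (g(x+t) + x)` as
multiplication forms an (additively idempotent) semiring, with additive identity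
the constant-∅ function and multiplicative identity the constant-{0} function. -/
theorem universal_contact_semiring :
    -- additive commutative idempotent monoid
    (∀ f g h, ucsAdd (ucsAdd f g) h = ucsAdd f (ucsAdd g h)) ∧
    (∀ f g, ucsAdd f g = ucsAdd g f) ∧
    (∀ f, ucsAdd f f = f) ∧
    (∀ f, ucsAdd ucsZero f = f) ∧ (∀ f, ucsAdd f ucsZero = f) ∧
    -- multiplicative monoid
    (∀ f g h, ucsMul (ucsMul f g) h = ucsMul f (ucsMul g h)) ∧
    (∀ f, ucsMul ucsOne f = f) ∧ (∀ f, ucsMul f ucsOne = f) ∧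
    -- distributivity
    (∀ f g h, ucsMul f (ucsAdd g h) = ucsAdd (ucsMul f g) (ucsMul f h)) ∧
    (∀ f g h, ucsMul (ucsAdd f g) h = ucsAdd (ucsMul f h) (ucsMul g h)) ∧
    -- zero is absorbing
    (∀ f, ucsMul ucsZero f = ucsZero) ∧ (∀ f, ucsMul f ucsZero = ucsZero) := by
  refine ⟨?_, ?_, ?_, ?_, ?_, ?_, ?_, ?_, ?_, ?_, ?_, ?_⟩
  · intro f g h; funext t; exact Set.union_assoc _ _ _
  · intro f g; funext t; exact Set.union_comm _ _
  · intro f; funext t; exact Set.union_self _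
  · intro f; funext t; exact Set.empty_union _
  · intro f; funext t; exact Set.union_empty _
  · intro f g h; funext t; ext y
    simp only [ucsMul, Set.mem_iUnion, Set.mem_image, exists_prop]
    constructor
    · rintro ⟨z, ⟨x, hx, a, ha, rfl⟩, b, hb, rfl⟩
      exact ⟨x, hx, b + a, ⟨a, ha, b, by rw [add_assoc] at hb; exact hb, rfl⟩,
        by ring⟩
    · rintro ⟨x, hx, c, ⟨a, ha, b, hb, rfl⟩, rfl⟩
      exact ⟨a + x, ⟨x, hx, a, ha, rfl⟩, b, by rw [add_assoc]; exact hb, by ring⟩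
  · intro f; funext t; ext y
    simp [ucsMul, ucsOne]
  · intro f; funext t; ext y
    simp [ucsMul, ucsOne]
  · intro f g h; funext t; ext y
    simp only [ucsMul, ucsAdd, Set.mem_iUnion, Set.mem_image, Set.mem_union, exists_prop]
    constructor
    · rintro ⟨x, hx, a, ha | ha, rfl⟩
      · exact Or.inl ⟨x, hx, a, ha, rfl⟩
      · exact Or.inr ⟨x, hx, a, ha, rfl⟩
    · rintro (⟨x, hx, a, ha, rfl⟩ | ⟨x, hx, a, ha, rfl⟩)
      · exact ⟨x, hx, a, Or.inl ha, rfl⟩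
      · exact ⟨x, hx, a, Or.inr ha, rfl⟩
  · intro f g h; funext t; ext y
    simp only [ucsMul, ucsAdd, Set.mem_iUnion, Set.mem_image, Set.mem_union, exists_prop]
    constructor
    · rintro ⟨x, hx | hx, a, ha, rfl⟩
      · exact Or.inl ⟨x, hx, a, ha, rfl⟩
      · exact Or.inr ⟨x, hx, a, ha, rfl⟩
    · rintro (⟨x, hx, a, ha, rfl⟩ | ⟨x, hx, a, ha, rfl⟩)
      · exact ⟨x, Or.inl hx, a, ha, rfl⟩
      · exact ⟨x, Or.inr hx, a, ha, rfl⟩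
  · intro f; funext t; ext y; simp [ucsMul, ucsZero]
  · intro f; funext t; ext y; simp [ucsMul, ucsZero]
end

section
/- The set W of functions w : R ∪ {∞} → R ∪ {∞} that are non-decreasing and satisfy lim_{t→∞} w(t) = ∞ (with w(∞) = ∞), equipped with (w ⊕ v)(t) = min(w(t), v(t)) and (w ⊗ v)(t) = w(v(t)), forms a semiring, with additive identity the constant-∞ function and multiplicative identity the identity function. -/
open Filter

/-- Membership in `W`: non-decreasing arrival functions on `ℝ ∪ {∞}` with
`w(∞) = ∞` and `lim_{t→∞} w(t) = ∞`. -/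
def MemW (w : WithTop ℝ → WithTop ℝ) : Prop :=
  Monotone w ∧ w ⊤ = ⊤ ∧ Tendsto w atTop atTop

/-- The set `W` of non-decreasing functions tending to `∞`, with pointwise `min`
as addition and composition `(w ⊗ v)(t) = w(v(t))` as multiplication, forms a
semiring with additive identity the constant-∞ function and multiplicative
identity the identity function. -/
theorem nondecreasing_endomorphism_semiring :
    let add : (WithTop ℝ → WithTop ℝ) → (WithTop ℝ → WithTop ℝ) → (WithTop ℝ → WithTop ℝ) :=
      fun w v => fun t => min (w t) (v t)
    let mul : (WithTop ℝ → WithTop ℝ) → (WithTop ℝ → WithTop ℝ) → (WithTop ℝ → WithTop ℝ) :=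
      fun w v => fun t => w (v t)
    let zero : WithTop ℝ → WithTop ℝ := fun _ => ⊤
    let one : WithTop ℝ → WithTop ℝ := fun t => t
    -- closure
    (∀ w v, MemW w → MemW v → MemW (add w v)) ∧
    (∀ w v, MemW w → MemW v → MemW (mul w v)) ∧
    MemW zero ∧ MemW one ∧
    -- additive commutative monoid
    (∀ w v u, add (add w v) u = add w (add v u)) ∧
    (∀ w v, add w v = add v w) ∧
    (∀ w, add zero w = w) ∧ (∀ w, add w zero = w) ∧
    -- multiplicative monoid
    (∀ w v u, mul (mul w v) u = mul w (mul v u)) ∧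
    (∀ w, mul one w = w) ∧ (∀ w, mul w one = w) ∧
    -- distributivity (left distributivity uses monotonicity)
    (∀ w v u, MemW w → MemW v → MemW u →
      mul w (add v u) = add (mul w v) (mul w u)) ∧
    (∀ w v u, MemW w → MemW v → MemW u →
      mul (add w v) u = add (mul w u) (mul v u)) ∧
    -- the constant-∞ function is absorbing
    (∀ w, MemW w → mul zero w = zero) ∧
    (∀ w, MemW w → mul w zero = zero) := by
  refine ⟨?_, ?_, ?_, ?_, ?_, ?_, ?_, ?_, ?_, ?_, ?_, ?_, ?_, ?_, ?_⟩
  · rintro w v ⟨hwm, hwt, hwl⟩ ⟨hvm, hvt, hvl⟩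
    exact ⟨fun a b h => min_le_min (hwm h) (hvm h), by simp [hwt, hvt],
      tendsto_atTop.2 fun b => ((hwl.eventually_ge_atTop b).and (hvl.eventually_ge_atTop b)).mono fun t h => le_min h.1 h.2⟩
  · rintro w v ⟨hwm, hwt, hwl⟩ ⟨hvm, hvt, hvl⟩
    exact ⟨fun a b h => hwm (hvm h), by simp [hvt, hwt], hwl.comp hvl⟩
  · exact ⟨monotone_const, rfl, tendsto_atTop.2 fun b => Eventually.of_forall fun _ => le_top⟩
  · exact ⟨monotone_id, rfl, tendsto_id⟩
  · intro w v u; funext t; exact min_assoc _ _ _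
  · intro w v; funext t; exact min_comm _ _
  · intro w; funext t; exact min_eq_right le_top
  · intro w; funext t; exact min_eq_left le_top
  · intro w v u; rfl
  · intro w; rfl
  · intro w; rfl
  · rintro w v u ⟨hwm, _, _⟩ _ _
    funext t
    exact hwm.map_min
  · intro w v u _ _ _; rfl
  · intro w _; rfl
  · rintro w ⟨_, hwt, _⟩; funext t; exact hwt
end
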